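/- Let f ∈ BV(ℝ) and let C = {x ∈ ℝ : M̃f(x) = |f|‾(x)}, where |f|‾(x) = limsup_{I ∋ x, |I| → 0} (1/|I|)∫_I |f|. Then for almost every x ∈ C, (M̃f)'(x) = 0. -/

import Mathlib

open MeasureTheory Filter Set Topology

/-- Average of |f| over the interval (a,b). -/
noncomputable def mAvg (f : ℝ → ℝ) (a b : ℝ) : ℝ := (∫ t in a..b, |f t|) / (b - a)

/-- Uncentered Hardy–Littlewood maximal function. -/
noncomputable def uMax (f : ℝ → ℝ) (x : ℝ) : ℝ :=
  sSup {y | ∃ a b : ℝ, a < b ∧ a ≤ x ∧ x ≤ b ∧ y = mAvg f a b}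

/-- f has bounded variation on ℝ. -/
def BVfun (f : ℝ → ℝ) : Prop := BoundedVariationOn f Set.univ

/-- Total variation of f over a set, as a real number. -/
noncomputable def varOn (f : ℝ → ℝ) (s : Set ℝ) : ℝ := (eVariationOn f s).toReal

/-- BV norm: |f(-∞)| + Var(f). -/
noncomputable def bvNorm (f : ℝ → ℝ) : ℝ :=
  |limUnder Filter.atBot f| + varOn f Set.univ

/-- Upper precise representative: limsup over intervals I ∋ x with |I| → 0 of averages of |f|. -/
noncomputable def ubar (f : ℝ → ℝ) (x : ℝ) : ℝ :=
  ⨅ h : {h : ℝ // 0 < h},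
    sSup {y | ∃ a b : ℝ, a < b ∧ a ≤ x ∧ x ≤ b ∧ b - a ≤ h.1 ∧ y = mAvg f a b}

/-- The open "interval" (a,b) in ℝ with extended-real endpoints. -/
noncomputable def erealIoo (a b : EReal) : Set ℝ := {x : ℝ | a < (x : EReal) ∧ (x : EReal) < b}

/-- Value of g at an extended-real point, understood as a limit at ±∞. -/
noncomputable def valAt (g : ℝ → ℝ) (a : EReal) : ℝ :=
  if a = ⊥ then limUnder Filter.atBot g
  else if a = ⊤ then limUnder Filter.atTop g
  else g a.toReal

/-!
Almost every `x` is a continuity point of `f` and a point of differentiability of `|f|`, since `f`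
is a difference of monotone functions. At such a point `ubar f x ≤ |f x| ≤ uMax f x`, so the
hypothesis forces `uMax f x = |f x|`: no average of `|f|` over an interval containing `x` exceeds
`|f x|`, which is only possible if `|f|' x = 0`. Moreover `uMax f ≥ |f|` on the dense set of
continuity points, with equality at `x`, so if `uMax f` is differentiable at `x` its derivative
equals that of `|f|`; otherwise `deriv` is `0` by convention.
-/

namespace LocallyBoundedVariationOn

variable {f : ℝ → ℝ}

theorem abs (hf : LocallyBoundedVariationOn f univ) :
    LocallyBoundedVariationOn (fun y => |f y|) univ := by
  simpa [Function.comp_def, Real.norm_eq_abs] using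
    lipschitzWith_one_norm.comp_locallyBoundedVariationOn hf

theorem countable_not_continuousAt (hf : LocallyBoundedVariationOn f univ) :
    {x | ¬ ContinuousAt f x}.Countable := by
  obtain ⟨p, q, hp, hq, rfl⟩ := hf.exists_monotoneOn_sub_monotoneOn
  refine ((monotoneOn_univ.1 hp).countable_not_continuousAt.union
    (monotoneOn_univ.1 hq).countable_not_continuousAt).mono fun x hx => ?_
  by_contra hpq
  simp only [mem_union, mem_ofPred_eq, not_or, not_not] at hpq
  exact hx (hpq.1.sub hpq.2)

theorem intervalIntegrable (hf : LocallyBoundedVariationOn f univ) (a b : ℝ) :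
    IntervalIntegrable f volume a b := by
  obtain ⟨p, q, hp, hq, rfl⟩ := hf.exists_monotoneOn_sub_monotoneOn
  exact ((monotoneOn_univ.1 hp).intervalIntegrable).sub (monotoneOn_univ.1 hq).intervalIntegrable

end LocallyBoundedVariationOn

theorem BoundedVariationOn.exists_abs_le {f : ℝ → ℝ} (hf : BoundedVariationOn f univ) :
    ∃ B, ∀ y, |f y| ≤ B := by
  refine ⟨|f 0| + (eVariationOn f univ).toReal, fun y => ?_⟩
  have hdist := hf.dist_le (mem_univ y) (mem_univ 0)
  rw [Real.dist_eq] at hdist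
  linarith [abs_sub_abs_le_abs_sub (f y) (f 0)]

section Averages

variable {f : ℝ → ℝ} {a b x v ε : ℝ}

theorem mAvg_nonneg (hab : a ≤ b) : 0 ≤ mAvg f a b :=
  div_nonneg (intervalIntegral.integral_nonneg hab fun _ _ => abs_nonneg _) (sub_nonneg.2 hab)

theorem dist_mAvg_le (hab : a < b) (hint : IntervalIntegrable (fun t => |f t|) volume a b)
    (h : ∀ y ∈ Icc a b, dist |f y| v ≤ ε) : dist (mAvg f a b) v ≤ ε := by
  have hba : 0 < b - a := sub_pos.2 hab
  have hsub : mAvg f a b - v = (∫ t in a..b, (|f t| - v)) / (b - a) := by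
    rw [intervalIntegral.integral_sub hint intervalIntegrable_const,
      intervalIntegral.integral_const, smul_eq_mul, mAvg]
    field_simp
  have hint_le : ‖∫ t in a..b, (|f t| - v)‖ ≤ ε * |b - a| :=
    intervalIntegral.norm_integral_le_of_norm_le_const fun y hy =>
      by simpa [Real.dist_eq] using h y (Ioc_subset_Icc_self (uIoc_of_le hab.le ▸ hy))
  rw [Real.dist_eq, hsub, abs_div, abs_of_pos hba, div_le_iff₀ hba]
  rwa [Real.norm_eq_abs, abs_of_pos hba] at hint_le

theorem exists_dist_mAvg_le_of_continuousAt
    (hint : ∀ a b, IntervalIntegrable (fun t => |f t|) volume a b) (hc : ContinuousAt f x)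
    (hε : 0 < ε) : ∃ δ > 0, ∀ a b, a < b → a ≤ x → x ≤ b → b - a ≤ δ →
      dist (mAvg f a b) |f x| ≤ ε := by
  obtain ⟨δ, hδ, hclose⟩ := Metric.continuousAt_iff.1 hc.abs ε hε
  refine ⟨δ / 2, half_pos hδ, fun a b hab hax hxb hba =>
    dist_mAvg_le hab (hint a b) fun y hy => (hclose ?_).le⟩
  rw [Real.dist_eq, abs_lt]
  constructor <;> linarith [hy.1, hy.2]

end Averages

section MaximalFunction

variable {f : ℝ → ℝ} {a b x : ℝ}

theorem bddAbove_setOf_mAvg (hf : BVfun f) :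
    BddAbove {y | ∃ a b : ℝ, a < b ∧ a ≤ x ∧ x ≤ b ∧ y = mAvg f a b} := by
  obtain ⟨B, hB⟩ := hf.exists_abs_le
  refine ⟨B, ?_⟩
  rintro _ ⟨a, b, hab, -, -, rfl⟩
  have hB' : ∀ y ∈ Icc a b, dist |f y| 0 ≤ B := fun y _ => by simpa [Real.dist_eq] using hB y
  have := dist_mAvg_le hab (hf.locallyBoundedVariationOn.abs.intervalIntegrable a b) hB'
  rw [Real.dist_0_eq_abs] at this
  exact (le_abs_self _).trans this

theorem mAvg_le_uMax (hf : BVfun f) (hab : a < b) (hax : a ≤ x) (hxb : x ≤ b) :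
    mAvg f a b ≤ uMax f x :=
  le_csSup (bddAbove_setOf_mAvg hf) ⟨a, b, hab, hax, hxb, rfl⟩

theorem integral_le_mul_uMax (hf : BVfun f) (hab : a < b) (hax : a ≤ x) (hxb : x ≤ b) :
    ∫ t in a..b, |f t| ≤ (b - a) * uMax f x := by
  have h := mAvg_le_uMax hf hab hax hxb
  rwa [mAvg, div_le_iff₀ (sub_pos.2 hab), mul_comm] at h

theorem abs_le_uMax_of_continuousAt (hf : BVfun f) (hc : ContinuousAt f x) :
    |f x| ≤ uMax f x := by
  refine le_of_forall_pos_le_add fun ε hε => ?_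
  obtain ⟨δ, hδ, hclose⟩ := exists_dist_mAvg_le_of_continuousAt
    hf.locallyBoundedVariationOn.abs.intervalIntegrable hc hε
  have hxδ : x < x + δ := lt_add_of_pos_right x hδ
  have h1 := abs_le.1 (Real.dist_eq _ _ ▸ hclose x (x + δ) hxδ le_rfl hxδ.le (by linarith))
  linarith [mAvg_le_uMax hf hxδ le_rfl hxδ.le]

theorem ubar_le_abs_of_continuousAt
    (hint : ∀ a b, IntervalIntegrable (fun t => |f t|) volume a b) (hc : ContinuousAt f x) :
    ubar f x ≤ |f x| := by
  refine le_of_forall_pos_le_add fun ε hε => ?_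
  obtain ⟨δ, hδ, hclose⟩ := exists_dist_mAvg_le_of_continuousAt hint hc hε
  refine ciInf_le_of_le ⟨0, forall_mem_range.2 fun h => Real.sSup_nonneg ?_⟩ ⟨δ, hδ⟩ ?_
  · rintro _ ⟨a, b, hab, -, -, -, rfl⟩
    exact mAvg_nonneg hab.le
  · refine csSup_le ⟨_, x, x + δ, by linarith, le_rfl, by linarith, by simp, rfl⟩ ?_
    rintro _ ⟨a, b, hab, hax, hxb, hba, rfl⟩
    linarith [(abs_le.1 (Real.dist_eq _ _ ▸ hclose a b hab hax hxb hba)).2]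

end MaximalFunction

section Derivatives

variable {g : ℝ → ℝ} {c x : ℝ}

theorem mul_lt_integral_of_lt_on_Ioo {a b v : ℝ} (hab : a < b)
    (hg : IntervalIntegrable g volume a b) (h : ∀ y ∈ Ioo a b, v < g y) :
    (b - a) * v < ∫ y in a..b, g y := by
  have hpos := intervalIntegral.intervalIntegral_pos_of_pos_on (hg.sub intervalIntegrable_const)
    (fun y hy => sub_pos.2 (h y hy)) hab
  rw [intervalIntegral.integral_sub hg intervalIntegrable_const,
    intervalIntegral.integral_const, smul_eq_mul] at hpos
  linarith

theorem HasDerivAt.eventually_nhdsGT_lt (hd : HasDerivAt g c x) (hc : 0 < c) :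
    ∀ᶠ y in 𝓝[>] x, g x < g y := by
  filter_upwards [(hasDerivAt_iff_tendsto_slope_left_right.1 hd).2.eventually (lt_mem_nhds hc),
    self_mem_nhdsWithin] with y hslope hy
  rw [slope_def_field] at hslope
  exact sub_pos.1 ((div_pos_iff_of_pos_right (sub_pos.2 hy)).1 hslope)

theorem HasDerivAt.eventually_nhdsLT_lt (hd : HasDerivAt g c x) (hc : c < 0) :
    ∀ᶠ y in 𝓝[<] x, g x < g y := by
  filter_upwards [(hasDerivAt_iff_tendsto_slope_left_right.1 hd).1.eventually (gt_mem_nhds hc),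
    self_mem_nhdsWithin] with y hslope (hy : y < x)
  rw [slope_def_field] at hslope
  rcases div_neg_iff.1 hslope with ⟨hgy, -⟩ | ⟨-, hyx⟩ <;> linarith

theorem HasDerivAt.eq_zero_of_integral_le (hd : HasDerivAt g c x)
    (hint : ∀ a b, IntervalIntegrable g volume a b)
    (hright : ∀ b, x < b → ∫ t in x..b, g t ≤ (b - x) * g x)
    (hleft : ∀ a, a < x → ∫ t in a..x, g t ≤ (x - a) * g x) : c = 0 := by
  refine le_antisymm (not_lt.1 fun hc => ?_) (not_lt.1 fun hc => ?_)
  · obtain ⟨b, hb, hsub⟩ := mem_nhdsGT_iff_exists_Ioo_subset.1 (hd.eventually_nhdsGT_lt hc)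
    exact (hright b hb).not_gt (mul_lt_integral_of_lt_on_Ioo hb (hint x b) hsub)
  · obtain ⟨a, ha, hsub⟩ := mem_nhdsLT_iff_exists_Ioo_subset.1 (hd.eventually_nhdsLT_lt hc)
    exact (hleft a ha).not_gt (mul_lt_integral_of_lt_on_Ioo ha (hint a x) hsub)

theorem HasDerivAt.eq_zero_of_nonneg_on_dense {S : Set ℝ} (hd : HasDerivAt g c x)
    (hS : Dense S) (hx : g x = 0) (hnonneg : ∀ y ∈ S, 0 ≤ g y) : c = 0 := by
  obtain ⟨hleft, hright⟩ := hasDerivAt_iff_tendsto_slope_left_right.1 hd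
  have hslope (y) : slope g x y = g y / (y - x) := by rw [slope_def_field, hx, sub_zero]
  refine le_antisymm ?_ ?_
  · have : (𝓝[Iio x ∩ S] x).NeBot := mem_closure_iff_nhdsWithin_neBot.1 <|
      closure_minimal (hS.open_subset_closure_inter isOpen_Iio) isClosed_closure (by simp)
    refine le_of_tendsto
      (hleft.mono_left (nhdsWithin_mono x (inter_subset_left : Iio x ∩ S ⊆ _))) ?_
    filter_upwards [self_mem_nhdsWithin] with y hy
    rw [hslope]
    exact div_nonpos_of_nonneg_of_nonpos (hnonneg y hy.2) (sub_nonpos.2 hy.1.le)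
  · have : (𝓝[Ioi x ∩ S] x).NeBot := mem_closure_iff_nhdsWithin_neBot.1 <|
      closure_minimal (hS.open_subset_closure_inter isOpen_Ioi) isClosed_closure (by simp)
    refine ge_of_tendsto
      (hright.mono_left (nhdsWithin_mono x (inter_subset_left : Ioi x ∩ S ⊆ _))) ?_
    filter_upwards [self_mem_nhdsWithin] with y hy
    rw [hslope]
    exact div_nonneg (hnonneg y hy.2) (sub_nonneg.2 hy.1.le)

end Derivatives

theorem deriv_uMax_eq_zero_of_uMax_eq_abs {f : ℝ → ℝ} {x : ℝ} (hf : BVfun f)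
    (hd : DifferentiableAt ℝ (fun y => |f y|) x) (hx : uMax f x = |f x|) :
    deriv (uMax f) x = 0 := by
  have hint := hf.locallyBoundedVariationOn.abs.intervalIntegrable
  have habs : deriv (fun y => |f y|) x = 0 := by
    refine hd.hasDerivAt.eq_zero_of_integral_le hint (fun b hb => ?_) (fun a ha => ?_)
    · simpa [hx] using integral_le_mul_uMax hf hb le_rfl hb.le
    · simpa [hx] using integral_le_mul_uMax hf ha ha.le le_rfl
  by_cases hM : DifferentiableAt ℝ (uMax f) x
  · have hcont : Dense {y | ContinuousAt f y} := by
      simpa [compl_ofPred] using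
        hf.locallyBoundedVariationOn.countable_not_continuousAt.dense_compl ℝ
    have := (hM.hasDerivAt.sub hd.hasDerivAt).eq_zero_of_nonneg_on_dense hcont
      (by simp [hx]) fun y hy => sub_nonneg.2 (abs_le_uMax_of_continuousAt hf hy)
    linarith
  · exact deriv_zero_of_not_differentiableAt hM

theorem stmt15 (f : ℝ → ℝ) (hf : BVfun f) :
    ∀ᵐ x : ℝ, uMax f x = ubar f x → deriv (uMax f) x = 0 := by
  have hcont : ∀ᵐ x : ℝ, ContinuousAt f x :=
    ae_iff.2 (hf.locallyBoundedVariationOn.countable_not_continuousAt.measure_zero _)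
  filter_upwards [hf.locallyBoundedVariationOn.abs.ae_differentiableAt, hcont]
    with x hd hc hx
  have hubar := ubar_le_abs_of_continuousAt hf.locallyBoundedVariationOn.abs.intervalIntegrable hc
  exact deriv_uMax_eq_zero_of_uMax_eq_abs hf hd
    (le_antisymm (hx ▸ hubar) (abs_le_uMax_of_continuousAt hf hc))
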